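/- arXiv:1411.0490 — 7 statements merged into one kernel-verified Lean document; each statement's English description precedes it below -/
import Mathlib

section
/- Input enabledness: for every configuration Γ ▷ W, every channel c and every closed value v there exists a system term W' such that Γ ▷ W --c?v--> W'. Moreover: (1) if rcv(Γ ▷ W, c) is false then W' = W; (2) if rcv(Γ ▷ W, c) holds then W' ≠ W, and for every closed value w we have Γ ▷ W --c?w--> W' (with the same residual W'). -/
/- A formalization of the Calculus of Collision-prone Communicating Processes (CCCP). -/

namespace CCCP

/-- Channels are represented by natural numbers. -/
abbrev Chan : Type := ℕ

/-- A channel environment maps each channel to an exposure time and a value. -/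
abbrev ChanEnv (V : Type) : Type := Chan → ℕ × V

/-- Expressions: values and (de Bruijn) data variables. -/
inductive Exp (V : Type) : Type where
  | val (v : V)
  | var (i : ℕ)

/-- Boolean expressions: equality tests and exposure checks. -/
inductive BExp (V : Type) : Type where
  | beq (e1 e2 : Exp V)
  | exposed (c : Chan)

/-- Station code (processes).  Data variables and process (recursion) variables
are in de Bruijn style: `rcv c P Q` binds data variable 0 in `P`, and `fix P`
binds process variable 0 in `P`. -/
inductive Proc (V : Type) : Type where
  | broadcast (c : Chan) (e : Exp V) (P : Proc V)  -- c!⟨e⟩.P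
  | rcv (c : Chan) (P Q : Proc V)                  -- ⌊c?(x).P⌋Q
  | sigma (P : Proc V)                             -- σ.P
  | tau (P : Proc V)                               -- τ.P
  | sum (P Q : Proc V)                             -- P + Q
  | mtch (b : BExp V) (P Q : Proc V)               -- [b]P,Q
  | pvar (X : ℕ)                                   -- process variable
  | nil                                            -- termination
  | fix (P : Proc V)                               -- recursion

/-- System terms.  `active c P` is an active receiver c(x).P which binds data
variable 0 in `P`; `res c n v W` is the channel restriction νc:(n,v).W. -/
inductive Sys (V : Type) : Type where
  | proc (P : Proc V)
  | active (c : Chan) (P : Proc V)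
  | par (W1 W2 : Sys V)
  | res (c : Chan) (n : ℕ) (v : V) (W : Sys V)

variable {V : Type}

/-- Evaluation of closed expressions. -/
def Exp.eval : Exp V → Option V
  | .val v => some v
  | .var _ => none

def Exp.liftD : Exp V → ℕ → Exp V
  | .val v, _ => .val v
  | .var i, k => if i < k then .var i else .var (i + 1)

def Exp.substD : Exp V → ℕ → V → Exp V
  | .val w, _, _ => .val w
  | .var i, j, v => if i = j then .val v else if j < i then .var (i - 1) else .var i

def BExp.liftD : BExp V → ℕ → BExp V
  | .beq e1 e2, k => .beq (e1.liftD k) (e2.liftD k)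
  | .exposed c, _ => .exposed c

def BExp.substD : BExp V → ℕ → V → BExp V
  | .beq e1 e2, j, v => .beq (e1.substD j v) (e2.substD j v)
  | .exposed c, _, _ => .exposed c

/-- Lifting of data variables (≥ k) in a process. -/
def Proc.liftD : Proc V → ℕ → Proc V
  | .broadcast c e P, k => .broadcast c (e.liftD k) (Proc.liftD P k)
  | .rcv c P Q, k => .rcv c (Proc.liftD P (k + 1)) (Proc.liftD Q k)
  | .sigma P, k => .sigma (Proc.liftD P k)
  | .tau P, k => .tau (Proc.liftD P k)
  | .sum P Q, k => .sum (Proc.liftD P k) (Proc.liftD Q k)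
  | .mtch b P Q, k => .mtch (b.liftD k) (Proc.liftD P k) (Proc.liftD Q k)
  | .pvar X, _ => .pvar X
  | .nil, _ => .nil
  | .fix P, k => .fix (Proc.liftD P k)

/-- Substitution of a (closed) value for data variable j in a process. -/
def Proc.substD : Proc V → ℕ → V → Proc V
  | .broadcast c e P, j, v => .broadcast c (e.substD j v) (Proc.substD P j v)
  | .rcv c P Q, j, v => .rcv c (Proc.substD P (j + 1) v) (Proc.substD Q j v)
  | .sigma P, j, v => .sigma (Proc.substD P j v)
  | .tau P, j, v => .tau (Proc.substD P j v)
  | .sum P Q, j, v => .sum (Proc.substD P j v) (Proc.substD Q j v)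
  | .mtch b P Q, j, v => .mtch (b.substD j v) (Proc.substD P j v) (Proc.substD Q j v)
  | .pvar X, _, _ => .pvar X
  | .nil, _, _ => .nil
  | .fix P, j, v => .fix (Proc.substD P j v)

/-- Lifting of process variables (≥ k) in a process. -/
def Proc.liftP : Proc V → ℕ → Proc V
  | .broadcast c e P, k => .broadcast c e (Proc.liftP P k)
  | .rcv c P Q, k => .rcv c (Proc.liftP P k) (Proc.liftP Q k)
  | .sigma P, k => .sigma (Proc.liftP P k)
  | .tau P, k => .tau (Proc.liftP P k)
  | .sum P Q, k => .sum (Proc.liftP P k) (Proc.liftP Q k)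
  | .mtch b P Q, k => .mtch b (Proc.liftP P k) (Proc.liftP Q k)
  | .pvar X, k => if X < k then .pvar X else .pvar (X + 1)
  | .nil, _ => .nil
  | .fix P, k => .fix (Proc.liftP P (k + 1))

/-- Substitution of a process S for process variable j (used for unfolding fix). -/
def Proc.substP : Proc V → ℕ → Proc V → Proc V
  | .broadcast c e P, j, S => .broadcast c e (Proc.substP P j S)
  | .rcv c P Q, j, S => .rcv c (Proc.substP P j (Proc.liftD S 0)) (Proc.substP Q j S)
  | .sigma P, j, S => .sigma (Proc.substP P j S)
  | .tau P, j, S => .tau (Proc.substP P j S)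
  | .sum P Q, j, S => .sum (Proc.substP P j S) (Proc.substP Q j S)
  | .mtch b P Q, j, S => .mtch b (Proc.substP P j S) (Proc.substP Q j S)
  | .pvar X, j, S => if X = j then S else if j < X then .pvar (X - 1) else .pvar X
  | .nil, _, _ => .nil
  | .fix P, j, S => .fix (Proc.substP P (j + 1) (Proc.liftP S 0))

/-- Iterated time-delay prefix σ^n.P -/
def Proc.sigmaIter : ℕ → Proc V → Proc V
  | 0, P => P
  | n + 1, P => .sigma (Proc.sigmaIter n P)

/-- Does the process contain an unguarded receiver listening on channel c? -/
def Proc.hasRcv : Proc V → Chan → Bool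
  | .broadcast _ _ _, _ => false
  | .rcv d _ _, c => d == c
  | .sigma _, _ => false
  | .tau _, _ => false
  | .sum P Q, c => Proc.hasRcv P c || Proc.hasRcv Q c
  | .mtch _ _ _, _ => false
  | .pvar _, _ => false
  | .nil, _ => false
  | .fix P, c => Proc.hasRcv P c

/-- Does the system term contain an unguarded receiver listening on channel c? -/
def Sys.hasRcv : Sys V → Chan → Bool
  | .proc P, c => P.hasRcv c
  | .active _ _, _ => false
  | .par W1 W2, c => Sys.hasRcv W1 c || Sys.hasRcv W2 c
  | .res d _ _ W, c => if d = c then false else Sys.hasRcv W c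

/-- The predicate rcv(Γ ▷ W, c): channel c is idle in Γ and W contains an
unguarded receiver actively awaiting a message on c. -/
def Isrcv (Γ : ChanEnv V) (W : Sys V) (c : Chan) : Prop :=
  (Γ c).1 = 0 ∧ W.hasRcv c = true

/- Closedness of terms: data variables < dk and process variables < pk. -/

def Exp.closedUnder : Exp V → ℕ → Bool
  | .val _, _ => true
  | .var i, dk => decide (i < dk)

def BExp.closedUnder : BExp V → ℕ → Bool
  | .beq e1 e2, dk => e1.closedUnder dk && e2.closedUnder dk
  | .exposed _, _ => true

def Proc.closedUnder : Proc V → ℕ → ℕ → Bool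
  | .broadcast _ e P, dk, pk => e.closedUnder dk && Proc.closedUnder P dk pk
  | .rcv _ P Q, dk, pk => Proc.closedUnder P (dk + 1) pk && Proc.closedUnder Q dk pk
  | .sigma P, dk, pk => Proc.closedUnder P dk pk
  | .tau P, dk, pk => Proc.closedUnder P dk pk
  | .sum P Q, dk, pk => Proc.closedUnder P dk pk && Proc.closedUnder Q dk pk
  | .mtch b P Q, dk, pk => b.closedUnder dk && Proc.closedUnder P dk pk && Proc.closedUnder Q dk pk
  | .pvar X, _, pk => decide (X < pk)
  | .nil, _, _ => true
  | .fix P, dk, pk => Proc.closedUnder P dk (pk + 1)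

def Sys.closedUnder : Sys V → ℕ → ℕ → Bool
  | .proc P, dk, pk => P.closedUnder dk pk
  | .active _ P, dk, pk => P.closedUnder (dk + 1) pk
  | .par W1 W2, dk, pk => Sys.closedUnder W1 dk pk && Sys.closedUnder W2 dk pk
  | .res _ _ _ W, dk, pk => Sys.closedUnder W dk pk

/-- Process variable k does not occur unguarded (i.e. every occurrence of k lies
under a time-consuming construct: broadcast, receiver, σ-prefix or matching). -/
def Proc.guardedVar : Proc V → ℕ → Bool
  | .broadcast _ _ _, _ => true
  | .rcv _ _ _, _ => true
  | .sigma _, _ => true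
  | .tau P, k => Proc.guardedVar P k
  | .sum P Q, k => Proc.guardedVar P k && Proc.guardedVar Q k
  | .mtch _ _ _, _ => true
  | .pvar X, k => X != k
  | .nil, _ => true
  | .fix P, k => Proc.guardedVar P (k + 1)

/-- Every recursion fix X.P in the term has its recursion variable guarded by a
time-consuming construct. -/
def Proc.wfRec : Proc V → Bool
  | .broadcast _ _ P => Proc.wfRec P
  | .rcv _ P Q => Proc.wfRec P && Proc.wfRec Q
  | .sigma P => Proc.wfRec P
  | .tau P => Proc.wfRec P
  | .sum P Q => Proc.wfRec P && Proc.wfRec Q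
  | .mtch _ P Q => Proc.wfRec P && Proc.wfRec Q
  | .pvar _ => true
  | .nil => true
  | .fix P => Proc.wfRec P && Proc.guardedVar P 0

def Sys.wfRec : Sys V → Bool
  | .proc P => P.wfRec
  | .active _ P => P.wfRec
  | .par W1 W2 => Sys.wfRec W1 && Sys.wfRec W2
  | .res _ _ _ W => Sys.wfRec W

/-- A legal system term: closed, and all recursion variables guarded. -/
def Sys.proper (W : Sys V) : Prop :=
  W.closedUnder 0 0 = true ∧ W.wfRec = true

/- Free channel occurrences. -/

def BExp.usesChan : BExp V → Chan → Bool
  | .beq _ _, _ => false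
  | .exposed d, c => d == c

def Proc.freeChan : Proc V → Chan → Bool
  | .broadcast d _ P, c => d == c || Proc.freeChan P c
  | .rcv d P Q, c => d == c || Proc.freeChan P c || Proc.freeChan Q c
  | .sigma P, c => Proc.freeChan P c
  | .tau P, c => Proc.freeChan P c
  | .sum P Q, c => Proc.freeChan P c || Proc.freeChan Q c
  | .mtch b P Q, c => b.usesChan c || Proc.freeChan P c || Proc.freeChan Q c
  | .pvar _, _ => false
  | .nil, _ => false
  | .fix P, c => Proc.freeChan P c

def Sys.freeChan : Sys V → Chan → Bool
  | .proc P, c => P.freeChan c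
  | .active d P, c => d == c || P.freeChan c
  | .par W1 W2, c => Sys.freeChan W1 c || Sys.freeChan W2 c
  | .res d _ _ W, c => if d = c then false else Sys.freeChan W c

/-- Labels of the intensional semantics. -/
inductive Label (V : Type) : Type where
  | out (c : Chan) (v : V)    -- c!v
  | inp (c : Chan) (v : V)    -- c?v
  | tau
  | sigma

def Label.usesChan : Label V → Chan → Prop
  | .out d _, c => d = c
  | .inp d _, c => d = c
  | .tau, _ => False
  | .sigma, _ => False

/-- Updating a channel environment at channel c upon a broadcast (or input) of
value v: this models collisions. -/
def updBcast (errv : V) (δ : V → ℕ) (Γ : ChanEnv V) (c : Chan) (v : V) : ChanEnv V :=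
  fun d => if d = c then
      (if (Γ c).1 = 0 then (δ v, v) else (max (δ v) (Γ c).1, errv))
    else Γ d

/-- The channel-environment update upd_λ(Γ). -/
def updL (errv : V) (δ : V → ℕ) : Label V → ChanEnv V → ChanEnv V
  | .out c v, Γ => updBcast errv δ Γ c v
  | .inp c v, Γ => updBcast errv δ Γ c v
  | .tau, Γ => Γ
  | .sigma, Γ => fun c => ((Γ c).1 - 1, (Γ c).2)

/-- Γ[c ↦ p] -/
def updEnv (Γ : ChanEnv V) (c : Chan) (p : ℕ × V) : ChanEnv V :=
  fun d => if d = c then p else Γ d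

/-- Evaluation of (closed) boolean expressions relative to a channel environment. -/
inductive BEval (Γ : ChanEnv V) : BExp V → Bool → Prop where
  | beqT {e1 e2 : Exp V} {v : V} :
      e1.eval = some v → e2.eval = some v → BEval Γ (.beq e1 e2) true
  | beqF {e1 e2 : Exp V} {v1 v2 : V} :
      e1.eval = some v1 → e2.eval = some v2 → v1 ≠ v2 → BEval Γ (.beq e1 e2) false
  | expT {c : Chan} : 0 < (Γ c).1 → BEval Γ (.exposed c) true
  | expF {c : Chan} : (Γ c).1 = 0 → BEval Γ (.exposed c) false

/-- The intensional semantics of CCCP: Γ ▷ W --λ--> W'.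
Parameters: `errv` is the error value, `δ` gives the transmission time of values. -/
inductive Step (errv : V) (δ : V → ℕ) : ChanEnv V → Sys V → Label V → Sys V → Prop where
  -- (Snd)
  | snd {Γ : ChanEnv V} {c : Chan} {e : Exp V} {v : V} {P : Proc V} :
      e.eval = some v →
      Step errv δ Γ (.proc (.broadcast c e P)) (.out c v) (.proc (Proc.sigmaIter (δ v) P))
  -- (Rcv)
  | rcv {Γ : ChanEnv V} {c : Chan} {P Q : Proc V} {v : V} :
      (Γ c).1 = 0 →
      Step errv δ Γ (.proc (.rcv c P Q)) (.inp c v) (.active c P)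
  -- (RcvIgn)
  | rcvIgn {Γ : ChanEnv V} {W : Sys V} {c : Chan} {v : V} :
      ¬ Isrcv Γ W c →
      Step errv δ Γ W (.inp c v) W
  -- (Sync) and its symmetric counterpart
  | sync {Γ : ChanEnv V} {W1 W2 W1' W2' : Sys V} {c : Chan} {v : V} :
      Step errv δ Γ W1 (.out c v) W1' → Step errv δ Γ W2 (.inp c v) W2' →
      Step errv δ Γ (.par W1 W2) (.out c v) (.par W1' W2')
  | syncR {Γ : ChanEnv V} {W1 W2 W1' W2' : Sys V} {c : Chan} {v : V} :
      Step errv δ Γ W1 (.inp c v) W1' → Step errv δ Γ W2 (.out c v) W2' →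
      Step errv δ Γ (.par W1 W2) (.out c v) (.par W1' W2')
  -- (RcvPar)
  | rcvPar {Γ : ChanEnv V} {W1 W2 W1' W2' : Sys V} {c : Chan} {v : V} :
      Step errv δ Γ W1 (.inp c v) W1' → Step errv δ Γ W2 (.inp c v) W2' →
      Step errv δ Γ (.par W1 W2) (.inp c v) (.par W1' W2')
  -- (TimeNil)
  | timeNil {Γ : ChanEnv V} :
      Step errv δ Γ (.proc .nil) .sigma (.proc .nil)
  -- (Sleep)
  | sleep {Γ : ChanEnv V} {P : Proc V} :
      Step errv δ Γ (.proc (.sigma P)) .sigma (.proc P)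
  -- (ActRcv)
  | actRcv {Γ : ChanEnv V} {c : Chan} {P : Proc V} :
      1 < (Γ c).1 →
      Step errv δ Γ (.active c P) .sigma (.active c P)
  -- (EndRcv)
  | endRcv {Γ : ChanEnv V} {c : Chan} {P : Proc V} {w : V} :
      (Γ c).1 = 1 → (Γ c).2 = w →
      Step errv δ Γ (.active c P) .sigma (.proc (Proc.substD P 0 w))
  -- (Timeout)
  | timeout {Γ : ChanEnv V} {c : Chan} {P Q : Proc V} :
      (Γ c).1 = 0 →
      Step errv δ Γ (.proc (.rcv c P Q)) .sigma (.proc Q)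
  -- (RcvLate)
  | rcvLate {Γ : ChanEnv V} {c : Chan} {P Q : Proc V} :
      0 < (Γ c).1 →
      Step errv δ Γ (.proc (.rcv c P Q)) .tau (.active c (Proc.liftD (Proc.substD P 0 errv) 0))
  -- (Tau)
  | tauStep {Γ : ChanEnv V} {P : Proc V} :
      Step errv δ Γ (.proc (.tau P)) .tau (.proc P)
  -- (Then)
  | thenB {Γ : ChanEnv V} {b : BExp V} {P Q : Proc V} :
      BEval Γ b true →
      Step errv δ Γ (.proc (.mtch b P Q)) .tau (.proc (.sigma P))
  -- (Else)
  | elseB {Γ : ChanEnv V} {b : BExp V} {P Q : Proc V} :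
      BEval Γ b false →
      Step errv δ Γ (.proc (.mtch b P Q)) .tau (.proc (.sigma Q))
  -- (TimePar)
  | timePar {Γ : ChanEnv V} {W1 W2 W1' W2' : Sys V} :
      Step errv δ Γ W1 .sigma W1' → Step errv δ Γ W2 .sigma W2' →
      Step errv δ Γ (.par W1 W2) .sigma (.par W1' W2')
  -- (TauPar) and its symmetric counterpart
  | tauParL {Γ : ChanEnv V} {W1 W2 W1' : Sys V} :
      Step errv δ Γ W1 .tau W1' →
      Step errv δ Γ (.par W1 W2) .tau (.par W1' W2)
  | tauParR {Γ : ChanEnv V} {W1 W2 W2' : Sys V} :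
      Step errv δ Γ W2 .tau W2' →
      Step errv δ Γ (.par W1 W2) .tau (.par W1 W2')
  -- (Rec)
  | recS {Γ : ChanEnv V} {P : Proc V} {lam : Label V} {W : Sys V} :
      Step errv δ Γ (.proc (Proc.substP P 0 (.fix P))) lam W →
      Step errv δ Γ (.proc (.fix P)) lam W
  -- (Sum) and its symmetric counterpart
  | sumL {Γ : ChanEnv V} {P Q : Proc V} {lam : Label V} {W : Sys V} :
      Step errv δ Γ (.proc P) lam W → (lam = .tau ∨ ∃ c v, lam = .out c v) →
      Step errv δ Γ (.proc (.sum P Q)) lam W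
  | sumR {Γ : ChanEnv V} {P Q : Proc V} {lam : Label V} {W : Sys V} :
      Step errv δ Γ (.proc Q) lam W → (lam = .tau ∨ ∃ c v, lam = .out c v) →
      Step errv δ Γ (.proc (.sum P Q)) lam W
  -- (SumTime)
  | sumTime {Γ : ChanEnv V} {P Q P' Q' : Proc V} :
      Step errv δ Γ (.proc P) .sigma (.proc P') → Step errv δ Γ (.proc Q) .sigma (.proc Q') →
      Step errv δ Γ (.proc (.sum P Q)) .sigma (.proc (.sum P' Q'))
  -- (SumRcv) and its symmetric counterpart
  | sumRcvL {Γ : ChanEnv V} {P Q : Proc V} {c : Chan} {v : V} {W : Sys V} :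
      Step errv δ Γ (.proc P) (.inp c v) W → Isrcv Γ (.proc P) c →
      Step errv δ Γ (.proc (.sum P Q)) (.inp c v) W
  | sumRcvR {Γ : ChanEnv V} {P Q : Proc V} {c : Chan} {v : V} {W : Sys V} :
      Step errv δ Γ (.proc Q) (.inp c v) W → Isrcv Γ (.proc Q) c →
      Step errv δ Γ (.proc (.sum P Q)) (.inp c v) W
  -- (ResI)
  | resI {Γ : ChanEnv V} {c : Chan} {n : ℕ} {v w : V} {W W' : Sys V} :
      Step errv δ (updEnv Γ c (n, v)) W (.out c w) W' →
      Step errv δ Γ (.res c n v W) .tau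
        (.res c (updBcast errv δ (updEnv Γ c (n, v)) c w c).1
                (updBcast errv δ (updEnv Γ c (n, v)) c w c).2 W')
  -- (ResV)
  | resV {Γ : ChanEnv V} {c : Chan} {n : ℕ} {v : V} {W W' : Sys V} {lam : Label V} :
      Step errv δ (updEnv Γ c (n, v)) W lam W' →
      ¬ lam.usesChan c → lam ≠ .sigma →
      Step errv δ Γ (.res c n v W) lam (.res c n v W')
  -- time passage under restriction
  | resT {Γ : ChanEnv V} {c : Chan} {n : ℕ} {v : V} {W W' : Sys V} :
      Step errv δ (updEnv Γ c (n, v)) W .sigma W' →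
      Step errv δ Γ (.res c n v W) .sigma (.res c (n - 1) v W')

/-- Configurations. -/
abbrev Config (V : Type) : Type := ChanEnv V × Sys V

/-- Instantaneous reductions (broadcast or internal step). -/
def RedI (errv : V) (δ : V → ℕ) (C C' : Config V) : Prop :=
  (Step errv δ C.1 C.2 .tau C'.2 ∧ C'.1 = C.1) ∨
  (∃ c v, Step errv δ C.1 C.2 (.out c v) C'.2 ∧ C'.1 = updBcast errv δ C.1 c v)

/-- Timed reductions. -/
def RedT (errv : V) (δ : V → ℕ) (C C' : Config V) : Prop :=
  Step errv δ C.1 C.2 .sigma C'.2 ∧ C'.1 = updL errv δ .sigma C.1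

/-- Reductions of configurations. -/
def Red (errv : V) (δ : V → ℕ) (C C' : Config V) : Prop :=
  RedI errv δ C C' ∨ RedT errv δ C C'

def RedStar (errv : V) (δ : V → ℕ) : Config V → Config V → Prop :=
  Relation.ReflTransGen (Red errv δ)

def RedIStar (errv : V) (δ : V → ℕ) : Config V → Config V → Prop :=
  Relation.ReflTransGen (RedI errv δ)

/-- Iteration of a relation a fixed number of times. -/
def relPow {α : Type _} (r : α → α → Prop) : ℕ → α → α → Prop
  | 0 => Eq
  | n + 1 => fun a c => ∃ b, r a b ∧ relPow r n b c

/-- Strong barb: channel c is exposed. -/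
def Barb (C : Config V) (c : Chan) : Prop := 0 < (C.1 c).1

/-- Weak barb. -/
def WBarb (errv : V) (δ : V → ℕ) (C : Config V) (c : Chan) : Prop :=
  ∃ C', RedStar errv δ C C' ∧ Barb C' c

/-- Extensional actions. -/
inductive Act (V : Type) : Type where
  | inp (c : Chan) (v : V)     -- c?v
  | time                       -- σ
  | tauA                       -- τ
  | deliver (c : Chan) (v : V) -- γ(c,v)
  | idle (c : Chan)            -- ι(c)

/-- The extensional LTS over configurations. -/
inductive EStep (errv : V) (δ : V → ℕ) : Config V → Act V → Config V → Prop where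
  | einp {Γ : ChanEnv V} {W W' : Sys V} {c : Chan} {v : V} :
      Step errv δ Γ W (.inp c v) W' →
      EStep errv δ (Γ, W) (.inp c v) (updBcast errv δ Γ c v, W')
  | etime {Γ : ChanEnv V} {W W' : Sys V} :
      Step errv δ Γ W .sigma W' →
      EStep errv δ (Γ, W) .time (updL errv δ .sigma Γ, W')
  | eshh {Γ : ChanEnv V} {W W' : Sys V} {c : Chan} {v : V} :
      Step errv δ Γ W (.out c v) W' →
      EStep errv δ (Γ, W) .tauA (updBcast errv δ Γ c v, W')
  | etau {Γ : ChanEnv V} {W W' : Sys V} :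
      Step errv δ Γ W .tau W' →
      EStep errv δ (Γ, W) .tauA (Γ, W')
  | edeliver {Γ : ChanEnv V} {W W' : Sys V} {c : Chan} {v : V} :
      Γ c = (1, v) → Step errv δ Γ W .sigma W' →
      EStep errv δ (Γ, W) (.deliver c v) (updL errv δ .sigma Γ, W')
  | eidle {Γ : ChanEnv V} {W : Sys V} {c : Chan} :
      (Γ c).1 = 0 →
      EStep errv δ (Γ, W) (.idle c) (Γ, W)

/-- Weak internal moves ⟹. -/
def TauStar (errv : V) (δ : V → ℕ) : Config V → Config V → Prop :=
  Relation.ReflTransGen (fun C C' => EStep errv δ C .tauA C')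

/-- Weak extensional action C ⟹α⟹ C'. -/
def WStep (errv : V) (δ : V → ℕ) (C : Config V) (α : Act V) (C' : Config V) : Prop :=
  ∃ C1 C2, TauStar errv δ C C1 ∧ EStep errv δ C1 α C2 ∧ TauStar errv δ C2 C'

/-- C ⟹α̂⟹ C'. -/
def WHat (errv : V) (δ : V → ℕ) (C : Config V) (α : Act V) (C' : Config V) : Prop :=
  match α with
  | .tauA => TauStar errv δ C C'
  | _ => WStep errv δ C α C'

/-- (Weak) bisimulations on the extensional LTS. -/
def IsBisim (errv : V) (δ : V → ℕ) (R : Config V → Config V → Prop) : Prop :=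
  Symmetric R ∧
  ∀ C1 C2, R C1 C2 → ∀ (α : Act V) C1', EStep errv δ C1 α C1' →
    ∃ C2', WHat errv δ C2 α C2' ∧ R C1' C2'

/-- Weak bisimilarity ≈. -/
def Bisim (errv : V) (δ : V → ℕ) (C1 C2 : Config V) : Prop :=
  ∃ R, IsBisim errv δ R ∧ R C1 C2

/-- Barb-preserving relations. -/
def BarbPreserving (errv : V) (δ : V → ℕ) (R : Config V → Config V → Prop) : Prop :=
  ∀ C1 C2, R C1 C2 → ∀ c, WBarb errv δ C1 c → WBarb errv δ C2 c

/-- Reduction-closed relations. -/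
def ReductionClosed (errv : V) (δ : V → ℕ) (R : Config V → Config V → Prop) : Prop :=
  ∀ C1 C2, R C1 C2 → ∀ C1', Red errv δ C1 C1' →
    ∃ C2', RedStar errv δ C2 C2' ∧ R C1' C2'

/-- Contextual relations. -/
def Contextual (R : Config V → Config V → Prop) : Prop :=
  ∀ Γ1 W1 Γ2 W2, R (Γ1, W1) (Γ2, W2) →
    ∀ W : Sys V, W.proper → R (Γ1, .par W1 W) (Γ2, .par W2 W)

/-- Reduction barbed congruence ≃: the largest symmetric, barb-preserving,
reduction-closed and contextual relation. -/
def RBC (errv : V) (δ : V → ℕ) (C1 C2 : Config V) : Prop :=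
  ∃ R, Symmetric R ∧ BarbPreserving errv δ R ∧ ReductionClosed errv δ R ∧
    Contextual R ∧ R C1 C2

/-- Well-formed configurations. -/
inductive WF : ChanEnv V → Sys V → Prop where
  | wfProc {Γ : ChanEnv V} (P : Proc V) : WF Γ (.proc P)
  | wfActive {Γ : ChanEnv V} {c : Chan} (P : Proc V) : 0 < (Γ c).1 → WF Γ (.active c P)
  | wfPar {Γ : ChanEnv V} {W1 W2 : Sys V} : WF Γ W1 → WF Γ W2 → WF Γ (.par W1 W2)
  | wfRes {Γ : ChanEnv V} {c : Chan} {n : ℕ} {v : V} {W : Sys V} :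
      WF (updEnv Γ c (n, v)) W → WF Γ (.res c n v W)

/-- Comparison of channel environments: Γ ≤ Γ'. -/
def EnvLE (Γ Γ' : ChanEnv V) : Prop := ∀ c : Chan, (Γ c).1 ≤ (Γ' c).1

/- An unguarded receiver on `c` is reached from the top of a station through `+` and `fix`
nodes only. `rcvDepth c P` is the length of the shortest such path (`⊤` if there is none);
the path never crosses a process variable, so unfolding `fix` cannot lengthen it, and
induction on it yields an input step whose target, the active receiver, does not depend on
the value. A system then takes the input in every component (by RcvIgn where nothing
listens), and the residual is unchanged exactly when no component listens. -/

noncomputable def Proc.rcvDepth (c : Chan) : Proc V → ℕ∞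
  | .rcv d _ _ => if d = c then 0 else ⊤
  | .sum P Q => min (P.rcvDepth c) (Q.rcvDepth c) + 1
  | .fix P => P.rcvDepth c + 1
  | _ => ⊤

theorem Proc.rcvDepth_ne_top_iff (c : Chan) (P : Proc V) :
    P.rcvDepth c ≠ ⊤ ↔ P.hasRcv c = true := by
  induction P with
  | rcv d P Q => by_cases h : d = c <;> simp [rcvDepth, hasRcv, h]
  | sum P Q ihP ihQ => simp [rcvDepth, hasRcv, ← ihP, ← ihQ, imp_iff_not_or]
  | fix P ih => simp [rcvDepth, hasRcv, ← ih]
  | _ => simp [rcvDepth, hasRcv]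

theorem Proc.rcvDepth_substP_le (c : Chan) (P : Proc V) (j : ℕ) (S : Proc V) :
    (P.substP j S).rcvDepth c ≤ P.rcvDepth c := by
  induction P generalizing j S with
  | rcv d P Q => simp [substP, rcvDepth]
  | sum P Q ihP ihQ =>
    simp only [substP, rcvDepth]
    gcongr
    exacts [ihP j S, ihQ j S]
  | fix P ih => simpa [substP, rcvDepth] using ih (j + 1) (S.liftP 0)
  | _ => simp [rcvDepth]

theorem not_isrcv_active (Γ : ChanEnv V) (c d : Chan) (P : Proc V) :
    ¬ Isrcv Γ (.active d P) c := by
  simp [Isrcv, Sys.hasRcv]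

theorem isrcv_par (Γ : ChanEnv V) (W1 W2 : Sys V) (c : Chan) :
    Isrcv Γ (.par W1 W2) c ↔ Isrcv Γ W1 c ∨ Isrcv Γ W2 c := by
  simp only [Isrcv, Sys.hasRcv, Bool.or_eq_true, and_or_left]

theorem not_isrcv_res_self (Γ : ChanEnv V) (c : Chan) (n : ℕ) (v : V) (W : Sys V) :
    ¬ Isrcv Γ (.res c n v W) c := by
  simp [Isrcv, Sys.hasRcv]

theorem isrcv_res_of_ne {d c : Chan} (hdc : d ≠ c) (Γ : ChanEnv V) (n : ℕ) (v : V)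
    (W : Sys V) :
    Isrcv Γ (.res d n v W) c ↔ Isrcv (updEnv Γ d (n, v)) W c := by
  simp [Isrcv, Sys.hasRcv, updEnv, hdc, hdc.symm]

section

variable (errv : V) (δ : V → ℕ)

theorem Proc.exists_forall_step_inp_of_rcvDepth_le {Γ : ChanEnv V} {c : Chan} (h0 : (Γ c).1 = 0)
    (n : ℕ) (P : Proc V) (hP : P.rcvDepth c ≤ n) :
    ∃ P', ∀ w : V, Step errv δ Γ (.proc P) (.inp c w) (.active c P') := by
  have hasRcv_of_le {Q : Proc V} {m : ℕ} (h : Q.rcvDepth c ≤ m) : Q.hasRcv c = true :=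
    (Q.rcvDepth_ne_top_iff c).mp (ne_top_of_le_ne_top (ENat.natCast_ne_top m) h)
  induction n generalizing P with
  | zero =>
    cases P <;> simp [rcvDepth] at hP
    subst hP
    exact ⟨_, fun _ => Step.rcv h0⟩
  | succ n ih =>
    cases P with
    | rcv d P Q =>
      obtain rfl : d = c := by simpa [hasRcv] using hasRcv_of_le hP
      exact ⟨P, fun _ => Step.rcv h0⟩
    | sum P Q =>
      rw [rcvDepth, Nat.cast_succ, ENat.add_le_add_iff_right ENat.one_ne_top, min_le_iff] at hP
      rcases hP with hP | hQ
      · obtain ⟨P', hP'⟩ := ih P hP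
        exact ⟨P', fun w => Step.sumRcvL (hP' w) ⟨h0, hasRcv_of_le hP⟩⟩
      · obtain ⟨P', hP'⟩ := ih Q hQ
        exact ⟨P', fun w => Step.sumRcvR (hP' w) ⟨h0, hasRcv_of_le hQ⟩⟩
    | fix P =>
      rw [rcvDepth, Nat.cast_succ, ENat.add_le_add_iff_right ENat.one_ne_top] at hP
      obtain ⟨P', hP'⟩ := ih _ ((P.rcvDepth_substP_le c 0 (.fix P)).trans hP)
      exact ⟨P', fun w => Step.recS (hP' w)⟩
    | _ => simp [rcvDepth] at hP

theorem Proc.exists_forall_step_inp_of_hasRcv {Γ : ChanEnv V} {c : Chan} {P : Proc V}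
    (h0 : (Γ c).1 = 0) (hP : P.hasRcv c = true) :
    ∃ P', ∀ w : V, Step errv δ Γ (.proc P) (.inp c w) (.active c P') := by
  obtain ⟨n, hn⟩ := ENat.ne_top_iff_exists.mp ((P.rcvDepth_ne_top_iff c).mpr hP)
  exact Proc.exists_forall_step_inp_of_rcvDepth_le errv δ h0 n P hn.ge

theorem Sys.exists_forall_step_inp (Γ : ChanEnv V) (W : Sys V) (c : Chan) :
    ∃ W', (∀ w : V, Step errv δ Γ W (.inp c w) W') ∧ (W' = W ↔ ¬ Isrcv Γ W c) := by
  have ignore {Γ : ChanEnv V} {W : Sys V} (h : ¬ Isrcv Γ W c) :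
      ∃ W', (∀ w : V, Step errv δ Γ W (.inp c w) W') ∧ (W' = W ↔ ¬ Isrcv Γ W c) :=
    ⟨W, fun _ => Step.rcvIgn h, iff_of_true rfl h⟩
  induction W generalizing Γ with
  | proc P =>
    by_cases h : Isrcv Γ (.proc P) c
    · obtain ⟨P', hP'⟩ := Proc.exists_forall_step_inp_of_hasRcv errv δ h.1 h.2
      exact ⟨.active c P', hP', by simpa using h⟩
    · exact ignore h
  | active d P => exact ignore (not_isrcv_active Γ c d P)
  | par W1 W2 ih1 ih2 =>
    obtain ⟨W1', hs1, he1⟩ := ih1 Γ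
    obtain ⟨W2', hs2, he2⟩ := ih2 Γ
    refine ⟨.par W1' W2', fun w => Step.rcvPar (hs1 w) (hs2 w), ?_⟩
    rw [Sys.par.injEq, he1, he2, isrcv_par, not_or]
  | res d n v W ih =>
    by_cases hdc : d = c
    · subst hdc
      exact ignore (not_isrcv_res_self Γ d n v W)
    · obtain ⟨W', hs, he⟩ := ih (updEnv Γ d (n, v))
      refine ⟨.res d n v W', fun w => Step.resV (hs w) (Ne.symm hdc) (by simp), ?_⟩
      simp only [Sys.res.injEq, true_and, he, isrcv_res_of_ne hdc]

end

theorem input_enabledness_general {V : Type} (errv : V) (δ : V → ℕ)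
    (Γ : ChanEnv V) (W : Sys V) (c : Chan) (v : V) :
    ∃ W' : Sys V,
      Step errv δ Γ W (.inp c v) W' ∧
      (¬ Isrcv Γ W c → W' = W) ∧
      (Isrcv Γ W c → W' ≠ W ∧ ∀ w : V, Step errv δ Γ W (.inp c w) W') := by
  obtain ⟨W', hstep, hfix⟩ := W.exists_forall_step_inp errv δ Γ c
  exact ⟨W', hstep v, hfix.mpr, fun h => ⟨fun he => hfix.mp he h, hstep⟩⟩

/-- Input enabledness (Lemma 2.4 of the paper). -/
theorem input_enabledness {V : Type} (errv : V) (δ : V → ℕ) (hδ : ∀ v : V, 1 ≤ δ v)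
    (Γ : ChanEnv V) (W : Sys V) (hW : W.proper) (c : Chan) (v : V) :
    ∃ W' : Sys V,
      Step errv δ Γ W (.inp c v) W' ∧
      (¬ Isrcv Γ W c → W' = W) ∧
      (Isrcv Γ W c → W' ≠ W ∧ ∀ w : V, Step errv δ Γ W (.inp c w) W') :=
  input_enabledness_general errv δ Γ W c v

end CCCP
end

section
/- Time determinism: if Γ ▷ W --σ--> W1 and Γ ▷ W --σ--> W2, then W1 = W2. -/
/- A formalization of the Calculus of Collision-prone Communicating Processes (CCCP). -/

namespace CCCP

variable {V : Type}

theorem sigma_det {V : Type} {errv : V} {δ : V → ℕ}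
    {Γ : ChanEnv V} {W : Sys V} {lam : Label V} {W1 : Sys V}
    (h1 : Step errv δ Γ W lam W1) :
    lam = .sigma → ∀ W2, Step errv δ Γ W .sigma W2 → W1 = W2 := by
  induction h1 with
  | snd _ => intro hl; cases hl
  | rcv _ => intro hl; cases hl
  | rcvIgn _ => intro hl; cases hl
  | sync _ _ => intro hl; cases hl
  | syncR _ _ => intro hl; cases hl
  | rcvPar _ _ => intro hl; cases hl
  | timeNil => intro _ W2 h2; cases h2; rfl
  | sleep => intro _ W2 h2; cases h2; rfl
  | actRcv h => intro _ W2 h2; cases h2 with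
    | actRcv _ => rfl
    | endRcv h1' _ => omega
  | endRcv h hw => intro _ W2 h2; cases h2 with
    | actRcv h' => omega
    | endRcv h1' hw' => rw [← hw, ← hw']
  | timeout h => intro _ W2 h2; cases h2 with
    | timeout _ => rfl
  | rcvLate _ => intro hl; cases hl
  | tauStep => intro hl; cases hl
  | thenB _ => intro hl; cases hl
  | elseB _ => intro hl; cases hl
  | timePar _ _ ih1 ih2 => intro _ W2 h2; cases h2 with
    | timePar ha hb => rw [ih1 rfl _ ha, ih2 rfl _ hb]
  | tauParL _ => intro hl; cases hl
  | tauParR _ => intro hl; cases hl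
  | recS _ ih => intro hl W2 h2; subst hl; cases h2 with
    | recS h' => exact ih rfl _ h'
  | sumL _ hc => intro hl; subst hl; rcases hc with h | ⟨c, v, h⟩ <;> cases h
  | sumR _ hc => intro hl; subst hl; rcases hc with h | ⟨c, v, h⟩ <;> cases h
  | sumTime _ _ ih1 ih2 => intro _ W2 h2; cases h2 with
    | sumTime ha hb =>
      have e1 := ih1 rfl _ ha
      have e2 := ih2 rfl _ hb
      cases e1; cases e2; rfl
    | sumL _ hc => rcases hc with h | ⟨c, v, h⟩ <;> cases h
    | sumR _ hc => rcases hc with h | ⟨c, v, h⟩ <;> cases h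
  | sumRcvL _ _ => intro hl; cases hl
  | sumRcvR _ _ => intro hl; cases hl
  | resI _ => intro hl; cases hl
  | resV _ _ hne => intro hl; exact absurd hl hne
  | resT _ ih => intro _ W2 h2; cases h2 with
    | resT h' => rw [ih rfl _ h']
    | resV _ _ hne => exact absurd rfl hne

/-- Time determinism (Proposition 2.5 of the paper). -/
theorem time_determinism {V : Type} (errv : V) (δ : V → ℕ) (hδ : ∀ v : V, 1 ≤ δ v)
    (Γ : ChanEnv V) (W : Sys V) (hW : W.proper) (W1 W2 : Sys V)
    (h1 : Step errv δ Γ W .sigma W1) (h2 : Step errv δ Γ W .sigma W2) :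
    W1 = W2 := sigma_det h1 rfl W2 h2

end CCCP
end

section
/- Maximal progress: if Γ ▷ W --σ--> W1, then for every label λ that is either τ or of the form c!v, there is no W2 such that Γ ▷ W --λ--> W2. -/
/- A formalization of the Calculus of Collision-prone Communicating Processes (CCCP). -/

namespace CCCP

variable {V : Type}

/-- Auxiliary lemma: a term that can delay cannot perform a τ or output step. -/
lemma no_instant_of_sigma {V : Type} {errv : V} {δ : V → ℕ} :
    ∀ {Γ : ChanEnv V} {W : Sys V} {lam0 : Label V} {W1 : Sys V},
      Step errv δ Γ W lam0 W1 → lam0 = Label.sigma →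
      ∀ (lam : Label V) (W2 : Sys V), Step errv δ Γ W lam W2 →
        (lam = .tau ∨ ∃ c v, lam = .out c v) → False := by
  intro Γ W lam0 W1 h
  induction h with
  | snd _ => intro hc; cases hc
  | rcv _ => intro hc; cases hc
  | rcvIgn _ => intro hc; cases hc
  | sync _ _ => intro hc; cases hc
  | syncR _ _ => intro hc; cases hc
  | rcvPar _ _ => intro hc; cases hc
  | rcvLate _ => intro hc; cases hc
  | tauStep => intro hc; cases hc
  | thenB _ => intro hc; cases hc
  | elseB _ => intro hc; cases hc
  | tauParL _ => intro hc; cases hc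
  | tauParR _ => intro hc; cases hc
  | sumL _ hside _ => intro hc; subst hc; simp at hside
  | sumR _ hside _ => intro hc; subst hc; simp at hside
  | sumRcvL _ _ => intro hc; cases hc
  | sumRcvR _ _ => intro hc; cases hc
  | resI _ => intro hc; cases hc
  | resV _ _ hne _ => intro hc; subst hc; exact absurd rfl hne
  | timeNil => intro _ lam W2 h2 hlam; cases h2 <;> simp_all
  | sleep => intro _ lam W2 h2 hlam; cases h2 <;> simp_all
  | actRcv _ => intro _ lam W2 h2 hlam; cases h2 <;> simp_all
  | endRcv _ _ => intro _ lam W2 h2 hlam; cases h2 <;> simp_all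
  | timeout h0 =>
      intro _ lam W2 h2 hlam
      cases h2 with
      | rcv _ => simp_all
      | rcvIgn _ => simp_all
      | rcvLate hpos => omega
      | timeout _ => simp_all
  | timePar _ _ ih1 ih2 =>
      intro _ lam W2 h2 hlam
      cases h2 with
      | rcvIgn _ => simp_all
      | sync hs _ => exact ih1 rfl _ _ hs (Or.inr ⟨_, _, rfl⟩)
      | syncR _ hs => exact ih2 rfl _ _ hs (Or.inr ⟨_, _, rfl⟩)
      | rcvPar _ _ => simp_all
      | tauParL hs => exact ih1 rfl _ _ hs (Or.inl rfl)
      | tauParR hs => exact ih2 rfl _ _ hs (Or.inl rfl)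
      | timePar _ _ => simp_all
  | recS _ ih =>
      intro hc lam W2 h2 hlam
      cases h2 with
      | rcvIgn _ => simp_all
      | recS hs => exact ih hc _ _ hs hlam
  | sumTime _ _ ih1 ih2 =>
      intro _ lam W2 h2 hlam
      cases h2 with
      | rcvIgn _ => simp_all
      | sumL hs _ => exact ih1 rfl _ _ hs hlam
      | sumR hs _ => exact ih2 rfl _ _ hs hlam
      | sumRcvL _ _ => simp_all
      | sumRcvR _ _ => simp_all
      | sumTime _ _ => simp_all
  | resT _ ih =>
      intro _ lam W2 h2 hlam
      cases h2 with
      | rcvIgn _ => simp_all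
      | resI hs => exact ih rfl _ _ hs (Or.inr ⟨_, _, rfl⟩)
      | resV hs _ _ => exact ih rfl _ _ hs hlam
      | resT _ => simp_all

/-- Maximal progress (Proposition 2.6 of the paper). -/
theorem maximal_progress {V : Type} (errv : V) (δ : V → ℕ) (hδ : ∀ v : V, 1 ≤ δ v)
    (Γ : ChanEnv V) (W : Sys V) (hW : W.proper) (W1 : Sys V)
    (h : Step errv δ Γ W .sigma W1) :
    ∀ lam : Label V, (lam = .tau ∨ ∃ c v, lam = .out c v) →
      ¬ ∃ W2 : Sys V, Step errv δ Γ W lam W2 := by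
  rintro lam hlam ⟨W2, h2⟩
  exact no_instant_of_sigma h rfl lam W2 h2 hlam

end CCCP
end

section
/- Parallel components: for every configuration Γ ▷ (W1 | W2): (1) Γ ▷ W1|W2 --τ--> W iff either W = W1'|W2 with Γ ▷ W1 --τ--> W1', or W = W1|W2' with Γ ▷ W2 --τ--> W2'; (2) Γ ▷ W1|W2 --c?v--> W iff there are W1', W2' with Γ ▷ W1 --c?v--> W1', Γ ▷ W2 --c?v--> W2' and W = W1'|W2'; (3) Γ ▷ W1|W2 --c!v--> W iff there are W1', W2' with W = W1'|W2' and either (Γ ▷ W1 --c!v--> W1' and Γ ▷ W2 --c?v--> W2') or (Γ ▷ W1 --c?v--> W1' and Γ ▷ W2 --c!v--> W2'); (4) Γ ▷ W1|W2 --σ--> W iff there are W1', W2' with Γ ▷ W1 --σ--> W1', Γ ▷ W2 --σ--> W2' and W = W1'|W2'. -/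
/- A formalization of the Calculus of Collision-prone Communicating Processes (CCCP). -/

namespace CCCP

variable {V : Type}

/-- Parallel components (Proposition 2.8 of the paper). -/
theorem parallel_components {V : Type} (errv : V) (δ : V → ℕ) (hδ : ∀ v : V, 1 ≤ δ v)
    (Γ : ChanEnv V) (W1 W2 : Sys V) (hW : (Sys.par W1 W2).proper) :
    (∀ W : Sys V, Step errv δ Γ (.par W1 W2) .tau W ↔
        ((∃ W1', Step errv δ Γ W1 .tau W1' ∧ W = .par W1' W2) ∨
         (∃ W2', Step errv δ Γ W2 .tau W2' ∧ W = .par W1 W2'))) ∧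
    (∀ (c : Chan) (v : V) (W : Sys V), Step errv δ Γ (.par W1 W2) (.inp c v) W ↔
        (∃ W1' W2', Step errv δ Γ W1 (.inp c v) W1' ∧
          Step errv δ Γ W2 (.inp c v) W2' ∧ W = .par W1' W2')) ∧
    (∀ (c : Chan) (v : V) (W : Sys V), Step errv δ Γ (.par W1 W2) (.out c v) W ↔
        (∃ W1' W2', W = .par W1' W2' ∧
          ((Step errv δ Γ W1 (.out c v) W1' ∧ Step errv δ Γ W2 (.inp c v) W2') ∨
           (Step errv δ Γ W1 (.inp c v) W1' ∧ Step errv δ Γ W2 (.out c v) W2')))) ∧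
    (∀ W : Sys V, Step errv δ Γ (.par W1 W2) .sigma W ↔
        (∃ W1' W2', Step errv δ Γ W1 .sigma W1' ∧
          Step errv δ Γ W2 .sigma W2' ∧ W = .par W1' W2')) := by
  constructor
  · intro W
    constructor
    · intro h
      cases h with
      | tauParL h => exact Or.inl ⟨_, h, rfl⟩
      | tauParR h => exact Or.inr ⟨_, h, rfl⟩
    · rintro (⟨W1', h, rfl⟩ | ⟨W2', h, rfl⟩)
      · exact Step.tauParL h
      · exact Step.tauParR h
  constructor
  · intro c v W
    constructor
    · intro h
      cases h with
      | rcvPar h1 h2 => exact ⟨_, _, h1, h2, rfl⟩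
      | rcvIgn hn =>
        refine ⟨W1, W2, Step.rcvIgn ?_, Step.rcvIgn ?_, rfl⟩
        · intro ⟨h0, hr⟩
          exact hn ⟨h0, by simp [Sys.hasRcv, hr]⟩
        · intro ⟨h0, hr⟩
          exact hn ⟨h0, by simp [Sys.hasRcv, hr]⟩
    · rintro ⟨W1', W2', h1, h2, rfl⟩
      exact Step.rcvPar h1 h2
  constructor
  · intro c v W
    constructor
    · intro h
      cases h with
      | sync h1 h2 => exact ⟨_, _, rfl, Or.inl ⟨h1, h2⟩⟩
      | syncR h1 h2 => exact ⟨_, _, rfl, Or.inr ⟨h1, h2⟩⟩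
    · rintro ⟨W1', W2', rfl, (⟨h1, h2⟩ | ⟨h1, h2⟩)⟩
      · exact Step.sync h1 h2
      · exact Step.syncR h1 h2
  · intro W
    constructor
    · intro h
      cases h with
      | timePar h1 h2 => exact ⟨_, _, h1, h2, rfl⟩
    · rintro ⟨W1', W2', h1, h2, rfl⟩
      exact Step.timePar h1 h2

end CCCP
end

section
/- Update of channel environments along weak internal moves: if Γ ▷ W ⟹ Γ' ▷ W' (a sequence of zero or more extensional τ-transitions), then Γ ≤ Γ'. -/
/- A formalization of the Calculus of Collision-prone Communicating Processes (CCCP). -/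

namespace CCCP

variable {V : Type}

lemma envLE_tau_step {V : Type} (errv : V) (δ : V → ℕ) {C C' : Config V}
    (h : EStep errv δ C .tauA C') : EnvLE C.1 C'.1 := by
  cases h with
  | eshh hs =>
    intro d
    simp only [updBcast]
    split
    · next heq =>
      subst heq
      split
      · next h0 => simp [h0]
      · exact le_max_right _ _
    · exact le_rfl
  | etau hs => intro d; exact le_rfl

lemma envLE_tauStar {V : Type} (errv : V) (δ : V → ℕ) {C C' : Config V}
    (h : TauStar errv δ C C') : EnvLE C.1 C'.1 := by
  induction h with
  | refl => intro d; exact le_rfl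
  | tail _ hstep ih =>
    intro d
    exact le_trans (ih d) (envLE_tau_step errv δ hstep d)

/-- Update of channel environments along weak internal moves (Lemma 4.2 of the paper). -/
theorem env_update_weak_tau {V : Type} (errv : V) (δ : V → ℕ) (hδ : ∀ v : V, 1 ≤ δ v)
    (Γ Γ' : ChanEnv V) (W W' : Sys V) (hW : W.proper)
    (h : TauStar errv δ (Γ, W) (Γ', W')) :
    EnvLE Γ Γ' := by
  exact envLE_tauStar errv δ h

end CCCP
end

section
/- If a configuration Γ ▷ W can perform a weak ι(c)-action (Γ ▷ W ⟹ι(c)⟹ C' for some C'), then it can perform a strong one: Γ ▷ W →ι(c)→ Γ ▷ W, i.e. Γ ⊢ c:free. -/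
/- A formalization of the Calculus of Collision-prone Communicating Processes (CCCP). -/

namespace CCCP

variable {V : Type}

lemma updBcast_mono {V : Type} (errv : V) (δ : V → ℕ) (Γ : ChanEnv V) (d : Chan) (v : V)
    (c : Chan) : (Γ c).1 ≤ (updBcast errv δ Γ d v c).1 := by
  unfold updBcast
  by_cases h : c = d
  · subst h
    simp only [if_pos rfl]
    by_cases h0 : (Γ c).1 = 0
    · simp [h0]
    · simp [h0]
  · simp [h]

lemma estep_tau_mono {V : Type} {errv : V} {δ : V → ℕ} {C C' : Config V}
    (h : EStep errv δ C .tauA C') (c : Chan) : (C.1 c).1 ≤ (C'.1 c).1 := by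
  cases h with
  | eshh hs => exact updBcast_mono _ _ _ _ _ c
  | etau hs => exact le_refl _

lemma taustar_mono {V : Type} {errv : V} {δ : V → ℕ} {C C' : Config V}
    (h : TauStar errv δ C C') (c : Chan) : (C.1 c).1 ≤ (C'.1 c).1 := by
  induction h with
  | refl => exact le_refl _
  | tail _ hstep ih => exact ih.trans (estep_tau_mono hstep c)

/-- A weak ι(c)-action can be performed strongly (Corollary A.7 of the paper). -/
theorem weak_idle_strong {V : Type} (errv : V) (δ : V → ℕ) (hδ : ∀ v : V, 1 ≤ δ v)
    (Γ : ChanEnv V) (W : Sys V) (hW : W.proper) (c : Chan)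
    (h : ∃ C' : Config V, WStep errv δ (Γ, W) (.idle c) C') :
    EStep errv δ (Γ, W) (.idle c) (Γ, W) ∧ (Γ c).1 = 0 := by
  obtain ⟨C', C1, C2, htau, hstep, _⟩ := h
  have h0 : (C1.1 c).1 = 0 := by cases hstep with | eidle h => exact h
  have hle := taustar_mono htau c
  have : (Γ c).1 = 0 := Nat.le_zero.mp (h0 ▸ hle)
  exact ⟨EStep.eidle this, this⟩

end CCCP
end

section
/- Channel exposure with respect to weak bisimilarity: if Γ1 ▷ W1 ≈ Γ2 ▷ W2, then for every channel c, Γ1 ⊢ c:free if and only if Γ2 ⊢ c:free. -/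
/- A formalization of the Calculus of Collision-prone Communicating Processes (CCCP). -/

namespace CCCP

variable {V : Type}

/-- A single τ-step in the extensional LTS never frees an exposed channel. -/
lemma tau_preserves_exposed {V : Type} {errv : V} {δ : V → ℕ} (hδ : ∀ v : V, 1 ≤ δ v)
    {C C' : Config V} (h : EStep errv δ C .tauA C') (c : Chan)
    (hc : 0 < (C.1 c).1) : 0 < (C'.1 c).1 := by
  cases h with
  | etau _ => exact hc
  | @eshh Γ W W' d v hs =>
    simp only [updBcast]
    by_cases hcd : c = d
    · subst hcd
      simp only [if_pos rfl]
      have := hδ v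
      by_cases h0 : (Γ c).1 = 0 <;> simp [h0] <;> omega
    · simpa [if_neg hcd] using hc

lemma taustar_preserves_exposed {V : Type} {errv : V} {δ : V → ℕ} (hδ : ∀ v : V, 1 ≤ δ v)
    {C C' : Config V} (h : TauStar errv δ C C') (c : Chan)
    (hc : 0 < (C.1 c).1) : 0 < (C'.1 c).1 := by
  induction h with
  | refl => exact hc
  | tail _ hstep ih => exact tau_preserves_exposed hδ hstep c ih

/-- One direction of the exposure lemma. -/
lemma bisim_free_mono {V : Type} {errv : V} {δ : V → ℕ} (hδ : ∀ v : V, 1 ≤ δ v)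
    {R : Config V → Config V → Prop} (hR : IsBisim errv δ R)
    {Γ1 Γ2 : ChanEnv V} {W1 W2 : Sys V} (hr : R (Γ1, W1) (Γ2, W2))
    {c : Chan} (hc : (Γ1 c).1 = 0) : (Γ2 c).1 = 0 := by
  have hstep : EStep errv δ (Γ1, W1) (.idle c) (Γ1, W1) := EStep.eidle hc
  obtain ⟨C2', hw, _⟩ := hR.2 _ _ hr _ _ hstep
  obtain ⟨C1', C2'', hts, hmid, _⟩ := hw
  have hfree : (C1'.1 c).1 = 0 := by
    cases hmid with
    | eidle h => exact h
  by_contra hne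
  have : 0 < (Γ2 c).1 := Nat.pos_of_ne_zero hne
  have := taustar_preserves_exposed hδ hts c this
  omega

/-- Channel exposure with respect to weak bisimilarity (Lemma 4.3 of the paper). -/
theorem bisim_channel_exposure {V : Type} (errv : V) (δ : V → ℕ) (hδ : ∀ v : V, 1 ≤ δ v)
    (Γ1 Γ2 : ChanEnv V) (W1 W2 : Sys V) (h1 : W1.proper) (h2 : W2.proper)
    (h : Bisim errv δ (Γ1, W1) (Γ2, W2)) :
    ∀ c : Chan, (Γ1 c).1 = 0 ↔ (Γ2 c).1 = 0 := by
  intro c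
  obtain ⟨R, hR, hr⟩ := h
  exact ⟨fun hc => bisim_free_mono hδ hR hr hc,
    fun hc => bisim_free_mono hδ hR (hR.1 hr) hc⟩

end CCCP
end
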